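/- Let P, Q : PMF (Bool × Bool × Bool), with a triple t = (x, (y₀, y₁)) interpreted as values of (X(z_k), Y(x₀), Y(x₁)). Suppose: (a) P.map Prod.snd = Q.map Prod.snd (equal (y₀, y₁)-marginals); (b) for all j, y : Bool, P {t | t.1 = j ∧ (if j then t.2.2 else t.2.1) = y} = Q {t | t.1 = j ∧ (if j then t.2.2 else t.2.1) = y}; and (c) P {(false, (false, false))} = Q {(false, (false, false))}. Then P = Q. -/

import Mathlib

/-- The parametrization claim in the proof of Theorem 1: a joint distribution of
`(X(z_k), Y(x₀), Y(x₁))` is determined by the marginal of `(Y(x₀), Y(x₁))`, the four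
probabilities `P(X(z_k) = j, Y(x_j) = y)`, and `P(X(z_k) = 0, Y(x₀) = 0, Y(x₁) = 0)`. -/
theorem pmf_triple_determined
    (P Q : PMF (Bool × Bool × Bool))
    (ha : P.map Prod.snd = Q.map Prod.snd)
    (hb : ∀ j y : Bool,
      P.toMeasure {t | t.1 = j ∧ (if j then t.2.2 else t.2.1) = y}
        = Q.toMeasure {t | t.1 = j ∧ (if j then t.2.2 else t.2.1) = y})
    (hc : P.toMeasure {(false, (false, false))} = Q.toMeasure {(false, (false, false))}) :
    P = Q := by
  have key : ∀ (R : PMF (Bool × Bool × Bool)) (S : Set (Bool × Bool × Bool)),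
      R.toMeasure S = ∑ t, S.indicator R t := fun R S => by
    rw [PMF.toMeasure_apply R (Set.to_countable S).measurableSet, tsum_fintype]
  have hA := fun y0 y1 : Bool => DFunLike.congr_fun ha (y0, y1)
  simp only [PMF.map_apply, tsum_fintype, Fintype.sum_prod_type, Fintype.sum_bool,
    Prod.ext_iff] at hA
  have hA00 := hA false false
  have hA01 := hA false true
  have hA10 := hA true false
  have hA11 := hA true true
  have hB00 := hb false false
  have hB01 := hb false true
  have hB10 := hb true false
  have hB11 := hb true true
  simp only [key, Fintype.sum_prod_type, Fintype.sum_bool, Set.indicator_apply,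
    Set.mem_setOf_eq, Set.mem_singleton_iff, Prod.ext_iff] at hB00 hB01 hB10 hB11 hc
  simp at hA00 hA01 hA10 hA11 hB00 hB01 hB10 hB11 hc
  -- cancellation helper: from a + b = c + d, b = d (and d finite), conclude a = c
  have cancel : ∀ {a b c d : ENNReal}, d ≠ ⊤ → b = d → a + b = c + d → a = c := by
    intro a b c d hd hbd h
    rw [hbd] at h
    exact WithTop.add_right_cancel hd h
  have cancel' : ∀ {a b c d : ENNReal}, c ≠ ⊤ → a = c → a + b = c + d → b = d := by
    intro a b c d hc' hac h
    rw [hac] at h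
    exact WithTop.add_left_cancel hc' h
  have e000 : P (false, false, false) = Q (false, false, false) := hc
  have e100 : P (true, false, false) = Q (true, false, false) :=
    cancel (PMF.apply_ne_top Q _) e000 hA00
  have e001 : P (false, false, true) = Q (false, false, true) :=
    cancel (PMF.apply_ne_top Q _) e000 hB00
  have e101 : P (true, false, true) = Q (true, false, true) :=
    cancel (PMF.apply_ne_top Q _) e001 hA01
  have e110 : P (true, true, false) = Q (true, true, false) :=
    cancel (PMF.apply_ne_top Q _) e100 hB10
  have e010 : P (false, true, false) = Q (false, true, false) :=
    cancel' (PMF.apply_ne_top Q _) e110 hA10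
  have e011 : P (false, true, true) = Q (false, true, true) :=
    cancel (PMF.apply_ne_top Q _) e010 hB01
  have e111 : P (true, true, true) = Q (true, true, true) :=
    cancel (PMF.apply_ne_top Q _) e101 hB11
  apply PMF.ext
  rintro ⟨x, y0, y1⟩
  cases x <;> cases y0 <;> cases y1 <;> assumption
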